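/- arXiv:math/0512259 — 3 statements merged into one kernel-verified Lean document; each statement's English description precedes it below -/
import Mathlib

section
/- For any real numbers $s, t$ and any $r > 1$, one has $\frac{2^{3-r}|s-t|^{r+1}}{(r+1)^2} \le (s-t)\int_t^s |u|^{r-1}\,du$. -/
open intervalIntegral

private lemma contAbsRpow (p : ℝ) (hp : 0 < p) : Continuous fun u : ℝ => |u| ^ p :=
  continuous_abs.rpow_const fun _ => Or.inr hp.le

private lemma mulRpowSubOne {r : ℝ} (hr : 1 < r) {x : ℝ} (hx : 0 ≤ x) :
    x * x ^ (r - 1) = x ^ r := by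
  rcases eq_or_lt_of_le hx with h | h
  · rw [← h, zero_mul, Real.zero_rpow (by intro h0; rw [h0] at hr; exact absurd hr (by norm_num))]
  · have h1 : r = 1 + (r - 1) := by ring
    rw [h1, Real.rpow_add h, Real.rpow_one]
    ring_nf

private lemma intNonneg {r : ℝ} (hr : 1 < r) {s : ℝ} (hs : 0 ≤ s) :
    ∫ u in (0:ℝ)..s, |u| ^ (r - 1) = s ^ r / r := by
  have h1 : ∫ u in (0:ℝ)..s, |u| ^ (r - 1) = ∫ u in (0:ℝ)..s, u ^ (r - 1) := by
    apply intervalIntegral.integral_congr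
    intro u hu
    rw [Set.uIcc_of_le hs] at hu
    simp only [abs_of_nonneg hu.1]
  have h2 : r - 1 + 1 = r := by ring
  rw [h1, integral_rpow (Or.inl (by linarith)), h2,
    Real.zero_rpow (by intro h0; rw [h0] at hr; exact absurd hr (by norm_num)), sub_zero]

private lemma intZero {r : ℝ} (hr : 1 < r) (s : ℝ) :
    ∫ u in (0:ℝ)..s, |u| ^ (r - 1) = s * |s| ^ (r - 1) / r := by
  rcases le_total 0 s with hs | hs
  · rw [intNonneg hr hs, abs_of_nonneg hs, mulRpowSubOne hr hs]
  · have h1 : ∫ u in (0:ℝ)..s, |u| ^ (r - 1) = - ∫ u in s..(0:ℝ), |u| ^ (r - 1) :=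
      intervalIntegral.integral_symm s 0
    have h2 : (∫ u in s..(0:ℝ), |u| ^ (r - 1)) = ∫ u in (0:ℝ)..(-s), |u| ^ (r - 1) := by
      have h3 : (∫ u in s..(0:ℝ), |u| ^ (r - 1))
          = ∫ u in s..(0:ℝ), |(-u)| ^ (r - 1) := by simp
      rw [h3, intervalIntegral.integral_comp_neg (fun u => |u| ^ (r - 1))]
      norm_num
    rw [h1, h2, intNonneg hr (by linarith : (0:ℝ) ≤ -s)]
    rw [← mulRpowSubOne hr (by linarith : (0:ℝ) ≤ -s), abs_of_nonpos hs]
    ring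

private lemma intEq {r : ℝ} (hr : 1 < r) (t s : ℝ) :
    ∫ u in t..s, |u| ^ (r - 1)
      = (s * |s| ^ (r - 1) - t * |t| ^ (r - 1)) / r := by
  have hint : ∀ a b : ℝ, IntervalIntegrable (fun u => |u| ^ (r - 1)) MeasureTheory.volume a b :=
    fun a b => (contAbsRpow (r - 1) (by linarith)).intervalIntegrable a b
  have h1 := intervalIntegral.integral_add_adjacent_intervals (hint t 0) (hint 0 s)
  have h2 : (∫ u in t..(0:ℝ), |u| ^ (r - 1)) = - ∫ u in (0:ℝ)..t, |u| ^ (r - 1) :=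
    intervalIntegral.integral_symm 0 t
  rw [← h1, h2, intZero hr s, intZero hr t]
  ring

private lemma superadd {r a b : ℝ} (hr : 1 ≤ r) (ha : 0 ≤ a) (hb : 0 ≤ b) :
    a ^ r + b ^ r ≤ (a + b) ^ r := by
  have h := NNReal.add_rpow_le_rpow_add a.toNNReal b.toNNReal hr
  have h2 := NNReal.coe_le_coe.2 h
  simpa only [NNReal.coe_rpow, NNReal.coe_add, Real.coe_toNNReal a ha,
    Real.coe_toNNReal b hb] using h2

private lemma mixed {r a b : ℝ} (hr : 1 ≤ r) (ha : 0 ≤ a) (hb : 0 ≤ b) :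
    (2:ℝ) ^ (1 - r) * (a + b) ^ r ≤ a ^ r + b ^ r := by
  have h := NNReal.rpow_add_le_mul_rpow_add_rpow a.toNNReal b.toNNReal hr
  have h2 := NNReal.coe_le_coe.2 h
  simp only [NNReal.coe_rpow, NNReal.coe_add, NNReal.coe_mul, NNReal.coe_ofNat,
    Real.coe_toNNReal a ha, Real.coe_toNNReal b hb] at h2
  have h3 : (2:ℝ) ^ (1 - r) * (a + b) ^ r
      ≤ (2:ℝ) ^ (1 - r) * ((2:ℝ) ^ (r - 1) * (a ^ r + b ^ r)) :=
    mul_le_mul_of_nonneg_left h2 (Real.rpow_nonneg (by norm_num) _)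
  have h4 : (2:ℝ) ^ (1 - r) * (2:ℝ) ^ (r - 1) = 1 := by
    rw [← Real.rpow_add (by norm_num : (0:ℝ) < 2)]
    norm_num
  calc (2:ℝ) ^ (1 - r) * (a + b) ^ r
      ≤ (2:ℝ) ^ (1 - r) * ((2:ℝ) ^ (r - 1) * (a ^ r + b ^ r)) := h3
    _ = a ^ r + b ^ r := by rw [← mul_assoc, h4, one_mul]

private lemma keyIneq {r : ℝ} (hr : 1 < r) {t s : ℝ} (h : t ≤ s) :
    (2:ℝ) ^ (1 - r) * (s - t) ^ r ≤ s * |s| ^ (r - 1) - t * |t| ^ (r - 1) := by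
  have h21 : (2:ℝ) ^ (1 - r) ≤ 1 :=
    Real.rpow_le_one_of_one_le_of_nonpos (by norm_num) (by linarith)
  have hst : (0:ℝ) ≤ s - t := by linarith
  rcases le_total 0 t with ht | ht
  · have hs : (0:ℝ) ≤ s := le_trans ht h
    rw [abs_of_nonneg hs, abs_of_nonneg ht, mulRpowSubOne hr hs, mulRpowSubOne hr ht]
    have h1 : (s - t) ^ r + t ^ r ≤ s ^ r := by
      have h0 := superadd hr.le hst ht
      have he : s - t + t = s := by ring
      rwa [he] at h0
    have h2 : (2:ℝ) ^ (1 - r) * (s - t) ^ r ≤ (s - t) ^ r := by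
      nlinarith [Real.rpow_nonneg hst r]
    linarith
  · rcases le_total s 0 with hs | hs
    · have hs' : s * |s| ^ (r - 1) = -((-s) ^ r) := by
        rw [abs_of_nonpos hs, ← mulRpowSubOne hr (by linarith : (0:ℝ) ≤ -s)]
        ring
      have ht' : t * |t| ^ (r - 1) = -((-t) ^ r) := by
        rw [abs_of_nonpos ht, ← mulRpowSubOne hr (by linarith : (0:ℝ) ≤ -t)]
        ring
      rw [hs', ht']
      have h1 : (s - t) ^ r + (-s) ^ r ≤ (-t) ^ r := by
        have h0 := superadd hr.le hst (by linarith : (0:ℝ) ≤ -s)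
        have he : s - t + -s = -t := by ring
        rwa [he] at h0
      have h2 : (2:ℝ) ^ (1 - r) * (s - t) ^ r ≤ (s - t) ^ r := by
        nlinarith [Real.rpow_nonneg hst r]
      linarith
    · have ht' : t * |t| ^ (r - 1) = -((-t) ^ r) := by
        rw [abs_of_nonpos ht, ← mulRpowSubOne hr (by linarith : (0:ℝ) ≤ -t)]
        ring
      rw [abs_of_nonneg hs, mulRpowSubOne hr hs, ht']
      have h1 := mixed hr.le hs (by linarith : (0:ℝ) ≤ -t)
      have he : s + -t = s - t := by ring
      rw [he] at h1
      linarith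

private lemma mainLe {r : ℝ} (hr : 1 < r) {t s : ℝ} (h : t ≤ s) :
    (2 : ℝ) ^ (3 - r) * |s - t| ^ (r + 1) / (r + 1) ^ 2
      ≤ (s - t) * ∫ u in t..s, |u| ^ (r - 1) := by
  have hst : (0:ℝ) ≤ s - t := by linarith
  have hr0 : (0:ℝ) < r := by linarith
  rw [intEq hr t s, abs_of_nonneg hst]
  have key := keyIneq hr h
  have hX : (s - t) ^ (r + 1) = (s - t) * (s - t) ^ r := by
    rcases eq_or_lt_of_le hst with he | hlt
    · rw [← he, zero_mul, Real.zero_rpow (by positivity)]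
    · rw [show r + 1 = 1 + r by ring, Real.rpow_add hlt, Real.rpow_one]
  have h22 : (2:ℝ) ^ (2:ℝ) = 4 := by
    rw [show (2:ℝ) = ((2:ℕ):ℝ) from by norm_num, Real.rpow_natCast]
    norm_num
  have h4 : (2:ℝ) ^ (3 - r) = 4 * (2:ℝ) ^ (1 - r) := by
    rw [show (3:ℝ) - r = 2 + (1 - r) by ring, Real.rpow_add (by norm_num : (0:ℝ) < 2), h22]
  rw [hX, h4]
  have h2pos : (0:ℝ) ≤ (2:ℝ) ^ (1 - r) := Real.rpow_nonneg (by norm_num) _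
  have hXr : (0:ℝ) ≤ (s - t) ^ r := Real.rpow_nonneg hst _
  have step1 : 4 * (2:ℝ) ^ (1 - r) * ((s - t) * (s - t) ^ r) / (r + 1) ^ 2
      ≤ (s - t) * ((2:ℝ) ^ (1 - r) * (s - t) ^ r / r) := by
    rw [show (s - t) * ((2:ℝ) ^ (1 - r) * (s - t) ^ r / r)
        = (s - t) * ((2:ℝ) ^ (1 - r) * (s - t) ^ r) / r from (mul_div_assoc _ _ _).symm,
      div_le_div_iff₀ (by positivity) hr0]
    nlinarith [mul_nonneg (mul_nonneg h2pos hXr) hst,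
      mul_nonneg (mul_nonneg (mul_nonneg h2pos hXr) hst) (sq_nonneg (r - 1))]
  have step2 : (s - t) * ((2:ℝ) ^ (1 - r) * (s - t) ^ r / r)
      ≤ (s - t) * ((s * |s| ^ (r - 1) - t * |t| ^ (r - 1)) / r) := by
    gcongr
  linarith

theorem stmt0 (r : ℝ) (hr : 1 < r) (s t : ℝ) :
    (2 : ℝ) ^ (3 - r) * |s - t| ^ (r + 1) / (r + 1) ^ 2
      ≤ (s - t) * ∫ u in t..s, |u| ^ (r - 1) := by
  rcases le_total t s with h | h
  · exact mainLe hr h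
  · have h1 := mainLe hr h
    rw [intervalIntegral.integral_symm t s] at h1
    rw [abs_sub_comm t s] at h1
    calc (2 : ℝ) ^ (3 - r) * |s - t| ^ (r + 1) / (r + 1) ^ 2
        ≤ (t - s) * (- ∫ u in t..s, |u| ^ (r - 1)) := h1
      _ = (s - t) * ∫ u in t..s, |u| ^ (r - 1) := by ring
end

section
/- For $r > 1$, one has $2^{3-r}|s-t|^{r+1} \le 4\big(|s|^{(r+1)/2}\mathrm{sgn}(s) - |t|^{(r+1)/2}\mathrm{sgn}(t)\big)^2$ for all real $s,t$. -/
/-!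
Put `p = (r + 1) / 2 ≥ 1` and `φ(x) = |x| ^ p * sign x`. It suffices to show
`|s - t| ^ p ≤ 2 ^ (p - 1) * |φ s - φ t|` and square, since `2 ^ (3 - r) * (2 ^ (p - 1)) ^ 2 = 4`.
As `φ` is odd we may assume `t ≤ s` and `0 ≤ s + t`, so `0 ≤ s`. If also `0 ≤ t`, superadditivity
of `x ↦ x ^ p` gives `(s - t) ^ p ≤ s ^ p - t ^ p`; if `t < 0`, convexity gives
`(s + |t|) ^ p ≤ 2 ^ (p - 1) * (s ^ p + |t| ^ p)`.
-/

open Real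

variable {p x y : ℝ}

lemma rpow_add_le_two_rpow_mul_add_rpow (hx : 0 ≤ x) (hy : 0 ≤ y) (hp : 1 ≤ p) :
    (x + y) ^ p ≤ 2 ^ (p - 1) * (x ^ p + y ^ p) := by
  lift x to NNReal using hx
  lift y to NNReal using hy
  exact_mod_cast NNReal.rpow_add_le_mul_rpow_add_rpow x y hp

lemma rpow_sub_le_rpow_sub_rpow (hy : 0 ≤ y) (hyx : y ≤ x) (hp : 1 ≤ p) :
    (x - y) ^ p ≤ x ^ p - y ^ p := by
  have := add_rpow_le_rpow_add (sub_nonneg.2 hyx) hy hp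
  rw [sub_add_cancel] at this
  linarith

lemma abs_rpow_mul_sign_neg : |-x| ^ p * sign (-x) = -(|x| ^ p * sign x) := by
  rw [abs_neg, sign_neg, mul_neg]

lemma abs_rpow_mul_sign_of_nonneg (hp : p ≠ 0) (hx : 0 ≤ x) : |x| ^ p * sign x = x ^ p := by
  rcases hx.eq_or_lt with rfl | hx
  · simp [zero_rpow hp]
  · rw [abs_of_pos hx, sign_of_pos hx, mul_one]

lemma abs_rpow_mul_sign_of_nonpos (hp : p ≠ 0) (hx : x ≤ 0) : |x| ^ p * sign x = -(-x) ^ p := by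
  rw [← abs_rpow_mul_sign_of_nonneg hp (neg_nonneg.2 hx), abs_rpow_mul_sign_neg, neg_neg]

theorem abs_sub_rpow_le_two_rpow_mul_abs_sub_abs_rpow_mul_sign (hp : 1 ≤ p) (s t : ℝ) :
    |s - t| ^ p ≤ 2 ^ (p - 1) * |(|s| ^ p * sign s - |t| ^ p * sign t)| := by
  wlog hts : t ≤ s generalizing s t
  · simpa only [abs_sub_comm] using this t s (le_of_not_ge hts)
  wlog hsum : 0 ≤ s + t generalizing s t
  · have := this (-t) (-s) (neg_le_neg hts) (by linarith)
    rwa [abs_rpow_mul_sign_neg, abs_rpow_mul_sign_neg, neg_sub_neg, neg_sub_neg] at this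
  have hp0 : p ≠ 0 := by positivity
  have hs : 0 ≤ s := by linarith
  rw [abs_of_nonneg (sub_nonneg.2 hts), abs_rpow_mul_sign_of_nonneg hp0 hs]
  rcases le_total 0 t with ht | ht
  · have hmono : t ^ p ≤ s ^ p := rpow_le_rpow ht hts (by linarith)
    rw [abs_rpow_mul_sign_of_nonneg hp0 ht, abs_of_nonneg (sub_nonneg.2 hmono)]
    calc (s - t) ^ p ≤ s ^ p - t ^ p := rpow_sub_le_rpow_sub_rpow ht hts hp
      _ ≤ 2 ^ (p - 1) * (s ^ p - t ^ p) :=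
        le_mul_of_one_le_left (sub_nonneg.2 hmono) (one_le_rpow one_le_two (by linarith))
  · have hconv := rpow_add_le_two_rpow_mul_add_rpow hs (neg_nonneg.2 ht) hp
    rwa [abs_rpow_mul_sign_of_nonpos hp0 ht, sub_neg_eq_add, abs_of_nonneg
      (add_nonneg (rpow_nonneg hs _) (rpow_nonneg (neg_nonneg.2 ht) _)),
      sub_eq_add_neg]

theorem stmt2 (r : ℝ) (hr : 1 < r) (s t : ℝ) :
    (2 : ℝ) ^ (3 - r) * |s - t| ^ (r + 1)
      ≤ 4 * (|s| ^ ((r + 1) / 2) * Real.sign s - |t| ^ ((r + 1) / 2) * Real.sign t) ^ 2 := by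
  set D := |s| ^ ((r + 1) / 2) * sign s - |t| ^ ((r + 1) / 2) * sign t
  have key : |s - t| ^ ((r + 1) / 2) ≤ 2 ^ ((r + 1) / 2 - 1) * |D| :=
    abs_sub_rpow_le_two_rpow_mul_abs_sub_abs_rpow_mul_sign (by linarith) s t
  have hexp : 3 - r + ((r + 1) / 2 - 1) * (2 : ℕ) = 2 := by push_cast; ring
  calc (2 : ℝ) ^ (3 - r) * |s - t| ^ (r + 1) = 2 ^ (3 - r) * (|s - t| ^ ((r + 1) / 2)) ^ 2 := by
        rw [← rpow_mul_natCast (abs_nonneg _)]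
        ring_nf
    _ ≤ 2 ^ (3 - r) * (2 ^ ((r + 1) / 2 - 1) * |D|) ^ 2 := by gcongr
    _ = 4 * D ^ 2 := by
        rw [mul_pow, sq_abs, ← rpow_mul_natCast zero_le_two, ← mul_assoc, ← rpow_add zero_lt_two,
          hexp]
        norm_num
end

section
/- Let $(P_t)_{t>0}$ be a Markov semigroup on a metric space $(H,d)$ such that for every Lipschitz $F$ and all $x,y$, $|P_tF(x) - P_tF(y)| \le \mathcal{L}(F)\,C\,t^{-1/(r-1)}$ for $t > 0$ ($r > 1$, $C$ a constant, $\mathcal{L}(F)$ the Lipschitz constant). If $\mu$ and $\nu$ are two $P_t$-invariant probability measures integrating all bounded Lipschitz functions, then $\mu = \nu$. -/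
open MeasureTheory NNReal

theorem stmt19 {H : Type*} [MeasurableSpace H] [MetricSpace H] [BorelSpace H]
    (r C : ℝ) (hr : 1 < r)
    (P : ℝ → (H → ℝ) → (H → ℝ))
    (hPmeas : ∀ t : ℝ, 0 < t → ∀ F : H → ℝ, Measurable F → Measurable (P t F))
    (hest : ∀ (F : H → ℝ) (L : ℝ≥0), LipschitzWith L F →
      ∀ t : ℝ, 0 < t → ∀ x y : H,
        |P t F x - P t F y| ≤ (L : ℝ) * C * t ^ (-(1 / (r - 1))))
    (μ ν : Measure H) [IsProbabilityMeasure μ] [IsProbabilityMeasure ν]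
    (hμinv : ∀ t : ℝ, 0 < t → ∀ F : H → ℝ, Measurable F →
      (∃ M : ℝ, ∀ x, |F x| ≤ M) → (∫ x, P t F x ∂μ) = ∫ x, F x ∂μ)
    (hνinv : ∀ t : ℝ, 0 < t → ∀ F : H → ℝ, Measurable F →
      (∃ M : ℝ, ∀ x, |F x| ≤ M) → (∫ x, P t F x ∂ν) = ∫ x, F x ∂ν) :
    μ = ν := by
  -- H is nonempty since μ is a probability measure
  have hne : Nonempty H := by
    by_contra h
    rw [not_nonempty_iff] at h
    have h0 : μ Set.univ = 1 := measure_univ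
    rw [Set.univ_eq_empty_iff.mpr h] at h0
    simp at h0
  obtain ⟨y0⟩ := hne
  have hα : 0 < 1 / (r - 1) := by
    apply div_pos one_pos; linarith
  -- Step 1: integrals of bounded Lipschitz functions agree
  have key : ∀ (F : H → ℝ) (L : ℝ≥0), LipschitzWith L F → (∃ M : ℝ, ∀ x, |F x| ≤ M) →
      (∫ x, F x ∂μ) = ∫ x, F x ∂ν := by
    intro F L hL hbd
    have hFmeas : Measurable F := hL.continuous.measurable
    have hbound : ∀ t : ℝ, 0 < t →
        |(∫ x, F x ∂μ) - ∫ x, F x ∂ν| ≤ 2 * ((L : ℝ) * C * t ^ (-(1 / (r - 1)))) := by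
      intro t ht
      have hPm : Measurable (P t F) := hPmeas t ht F hFmeas
      set B := (L : ℝ) * C * t ^ (-(1 / (r - 1))) with hB
      have hPbd : ∀ x, ‖P t F x - P t F y0‖ ≤ B := by
        intro x
        rw [Real.norm_eq_abs]
        exact hest F L hL t ht x y0
      have hPint : Integrable (P t F) μ := by
        refine ⟨hPm.aestronglyMeasurable, ?_⟩
        apply HasFiniteIntegral.of_bounded (C := |P t F y0| + B)
        filter_upwards with x
        rw [Real.norm_eq_abs]
        have h' := abs_sub_abs_le_abs_sub (P t F x) (P t F y0)
        have hb := hPbd x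
        rw [Real.norm_eq_abs] at hb
        linarith
      have hPintν : Integrable (P t F) ν := by
        refine ⟨hPm.aestronglyMeasurable, ?_⟩
        apply HasFiniteIntegral.of_bounded (C := |P t F y0| + B)
        filter_upwards with x
        rw [Real.norm_eq_abs]
        have h' := abs_sub_abs_le_abs_sub (P t F x) (P t F y0)
        have hb := hPbd x
        rw [Real.norm_eq_abs] at hb
        linarith
      have hμ1 : |(∫ x, P t F x ∂μ) - P t F y0| ≤ B := by
        have h1 : (∫ x, P t F x ∂μ) - P t F y0 = ∫ x, (P t F x - P t F y0) ∂μ := by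
          rw [integral_sub hPint (integrable_const _), integral_const]
          simp
        rw [h1, ← Real.norm_eq_abs]
        calc ‖∫ x, (P t F x - P t F y0) ∂μ‖
            ≤ B * (μ Set.univ).toReal :=
              norm_integral_le_of_norm_le_const (ae_of_all _ hPbd)
          _ = B := by simp
      have hν1 : |(∫ x, P t F x ∂ν) - P t F y0| ≤ B := by
        have h1 : (∫ x, P t F x ∂ν) - P t F y0 = ∫ x, (P t F x - P t F y0) ∂ν := by
          rw [integral_sub hPintν (integrable_const _), integral_const]
          simp
        rw [h1, ← Real.norm_eq_abs]
        calc ‖∫ x, (P t F x - P t F y0) ∂ν‖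
            ≤ B * (ν Set.univ).toReal :=
              norm_integral_le_of_norm_le_const (ae_of_all _ hPbd)
          _ = B := by simp
      have e1 := hμinv t ht F hFmeas hbd
      have e2 := hνinv t ht F hFmeas hbd
      rw [← e1, ← e2]
      calc |(∫ x, P t F x ∂μ) - ∫ x, P t F x ∂ν|
          ≤ |(∫ x, P t F x ∂μ) - P t F y0| + |(∫ x, P t F x ∂ν) - P t F y0| := by
            rw [abs_sub_comm (∫ x, P t F x ∂ν)] ; exact abs_sub_le _ _ _ |>.trans (by rw [abs_sub_comm (P t F y0)])
        _ ≤ 2 * B := by linarith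
    -- take t → ∞
    have htend : Filter.Tendsto (fun t : ℝ => 2 * ((L : ℝ) * C * t ^ (-(1 / (r - 1)))))
        Filter.atTop (nhds 0) := by
      have h0 : Filter.Tendsto (fun t : ℝ => t ^ (-(1 / (r - 1)))) Filter.atTop (nhds 0) :=
        tendsto_rpow_neg_atTop hα
      have := (h0.const_mul (2 * ((L : ℝ) * C)))
      simp only [mul_zero] at this
      convert this using 2 with t
      ring
    have hle : |(∫ x, F x ∂μ) - ∫ x, F x ∂ν| ≤ 0 := by
      refine ge_of_tendsto htend ?_
      filter_upwards [Filter.eventually_ge_atTop 1] with t ht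
      exact hbound t (lt_of_lt_of_le one_pos ht)
    have : (∫ x, F x ∂μ) - ∫ x, F x ∂ν = 0 := abs_nonpos_iff.mp hle
    linarith
  -- Step 2: measures agree on closed sets
  have hclosed : ∀ K : Set H, IsClosed K → μ K = ν K := by
    intro K hK
    rcases K.eq_empty_or_nonempty with hKe | hKne
    · simp [hKe]
    -- approximating sequence
    set f : ℕ → H → ℝ := fun n x => max (1 - (n + 1 : ℝ) * Metric.infDist x K) 0 with hf
    have hLip : ∀ n : ℕ, LipschitzWith ((n : ℝ≥0) + 1) (f n) := by
      intro n
      have hg : LipschitzWith ((n : ℝ≥0) + 1)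
          (fun x => 1 - (n + 1 : ℝ) * Metric.infDist x K) := by
        apply LipschitzWith.of_dist_le_mul
        intro x y
        have h1 := (Metric.lipschitz_infDist_pt K).dist_le_mul x y
        simp only [Real.dist_eq, NNReal.coe_one, one_mul] at h1 ⊢
        have : (1 - (n + 1 : ℝ) * Metric.infDist x K) - (1 - (n + 1 : ℝ) * Metric.infDist y K)
            = (n + 1 : ℝ) * (Metric.infDist y K - Metric.infDist x K) := by ring
        rw [this, abs_mul, abs_of_nonneg (by positivity : (0:ℝ) ≤ (n:ℝ) + 1), abs_sub_comm]
        push_cast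
        exact mul_le_mul_of_nonneg_left h1 (by positivity)
      exact hg.max_const 0
    have hf01 : ∀ n x, 0 ≤ f n x ∧ f n x ≤ 1 := by
      intro n x
      constructor
      · exact le_max_right _ _
      · apply max_le _ zero_le_one
        have := Metric.infDist_nonneg (x := x) (s := K)
        nlinarith
    have hfbd : ∀ n : ℕ, ∃ M : ℝ, ∀ x, |f n x| ≤ M := by
      intro n
      exact ⟨1, fun x => by
        rw [abs_of_nonneg (hf01 n x).1]; exact (hf01 n x).2⟩
    have hfmeas : ∀ n, Measurable (f n) := fun n => (hLip n).continuous.measurable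
    -- pointwise convergence to indicator of K
    have hptw : ∀ x : H, Filter.Tendsto (fun n => f n x) Filter.atTop
        (nhds (Set.indicator K (fun _ => (1:ℝ)) x)) := by
      intro x
      by_cases hx : x ∈ K
      · have : ∀ n, f n x = 1 := by
          intro n
          simp [hf, Metric.infDist_zero_of_mem hx]
        simp only [Set.indicator_of_mem hx]
        simp_rw [this]
        exact tendsto_const_nhds
      · have hd : 0 < Metric.infDist x K := (hK.notMem_iff_infDist_pos hKne).mp hx
        rw [Set.indicator_of_notMem hx]
        apply tendsto_atTop_of_eventually_const (i₀ := ⌈(Metric.infDist x K)⁻¹⌉₊)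
        intro n hn
        have h1 : (Metric.infDist x K)⁻¹ ≤ (n : ℝ) := by
          calc (Metric.infDist x K)⁻¹ ≤ (⌈(Metric.infDist x K)⁻¹⌉₊ : ℝ) := Nat.le_ceil _
            _ ≤ (n : ℝ) := by exact_mod_cast hn
        have h2 : 1 ≤ (n + 1 : ℝ) * Metric.infDist x K := by
          have : (Metric.infDist x K)⁻¹ * Metric.infDist x K ≤ (n:ℝ) * Metric.infDist x K :=
            mul_le_mul_of_nonneg_right h1 hd.le
          rw [inv_mul_cancel₀ hd.ne'] at this
          nlinarith
        simp only [hf]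
        rw [max_eq_right]
        linarith
    -- dominated convergence for both measures
    have hdomμ : Filter.Tendsto (fun n => ∫ x, f n x ∂μ) Filter.atTop
        (nhds (∫ x, Set.indicator K (fun _ => (1:ℝ)) x ∂μ)) := by
      refine tendsto_integral_of_dominated_convergence (fun _ => 1)
        (fun n => (hfmeas n).aestronglyMeasurable) (integrable_const 1) ?_
        (ae_of_all _ hptw)
      intro n
      filter_upwards with x
      rw [Real.norm_eq_abs, abs_of_nonneg (hf01 n x).1]
      exact (hf01 n x).2
    have hdomν : Filter.Tendsto (fun n => ∫ x, f n x ∂ν) Filter.atTop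
        (nhds (∫ x, Set.indicator K (fun _ => (1:ℝ)) x ∂ν)) := by
      refine tendsto_integral_of_dominated_convergence (fun _ => 1)
        (fun n => (hfmeas n).aestronglyMeasurable) (integrable_const 1) ?_
        (ae_of_all _ hptw)
      intro n
      filter_upwards with x
      rw [Real.norm_eq_abs, abs_of_nonneg (hf01 n x).1]
      exact (hf01 n x).2
    have heq : ∀ n, (∫ x, f n x ∂μ) = ∫ x, f n x ∂ν := fun n =>
      key (f n) _ (hLip n) (hfbd n)
    simp_rw [heq] at hdomμ
    have hint_eq := tendsto_nhds_unique hdomμ hdomν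
    rw [integral_indicator_const _ hK.measurableSet,
      integral_indicator_const _ hK.measurableSet] at hint_eq
    simp only [smul_eq_mul, mul_one] at hint_eq
    exact (ENNReal.toReal_eq_toReal_iff' (measure_ne_top μ K) (measure_ne_top ν K)).mp hint_eq
  -- Step 3: conclude by π-system argument on closed sets
  refine ext_of_generate_finite {s | IsClosed s} ?_ isPiSystem_isClosed
    (fun s hs => hclosed s hs) ?_
  · rw [BorelSpace.measurable_eq (α := H), borel_eq_generateFrom_isClosed]
  · simp
end
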